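/- arXiv:2604.15928 — 2 statements merged into one kernel-verified Lean document; each statement's English description precedes it below -/
import Mathlib

section
/- Let F be a field of characteristic 2. If a, b, c, d, α, β, γ, δ ∈ F× and x, y ∈ F are not both zero, and we set λ = x² + αγy², then λ ≠ 0 implies {α, β}₂ + {γ, δ}₂ = {α, λβ}₂ + {γ, λδ}₂ in K₂(F)/2K₂(F). -/
namespace Milnor

variable (F : Type*) [Field F]

/-- Relations defining the Milnor K-group `K_n(F)`: multiplicativity in each
slot and the Steinberg relation. -/
def rels (n : ℕ) : AddSubgroup (FreeAbelianGroup (Fin n → Fˣ)) :=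
  AddSubgroup.closure
    ({ x | ∃ (i : Fin n) (u v w : Fin n → Fˣ),
        (∀ j, j ≠ i → u j = v j ∧ u j = w j) ∧ w i = u i * v i ∧
        x = FreeAbelianGroup.of w - FreeAbelianGroup.of u - FreeAbelianGroup.of v } ∪
     { x | ∃ (i j : Fin n) (u : Fin n → Fˣ), i ≠ j ∧ (u i : F) + (u j : F) = 1 ∧
        x = FreeAbelianGroup.of u })

/-- The Milnor K-group `K_n(F)`. -/
def K (n : ℕ) := FreeAbelianGroup (Fin n → Fˣ) ⧸ rels F n

instance (n : ℕ) : AddCommGroup (K F n) :=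
  QuotientAddGroup.Quotient.addCommGroup _

/-- The subgroup `2^m K_n(F)` of `K_n(F)`. -/
def modSub (n m : ℕ) : AddSubgroup (K F n) :=
  AddSubgroup.closure { x | ∃ y : K F n, x = (2 ^ m) • y }

/-- The quotient `K_n(F)/2^m K_n(F)`. -/
def KMod (n m : ℕ) := K F n ⧸ modSub F n m

instance (n m : ℕ) : AddCommGroup (KMod F n m) :=
  QuotientAddGroup.Quotient.addCommGroup _

variable {F}

/-- The class of the symbol `{v 0, …, v (n-1)}` in `K_n(F)/2^m K_n(F)`. -/
def symbol {n : ℕ} (m : ℕ) (v : Fin n → Fˣ) : KMod F n m :=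
  QuotientAddGroup.mk (QuotientAddGroup.mk (FreeAbelianGroup.of v) : K F n)

open scoped Classical in
/-- `{a,b}` in `K₂(F)/2^m K₂(F)` for field elements, with junk value `0` if an
entry vanishes.  So `s2 1 a b` is `{a,b}₂` and `s2 2 a b` is `{a,b}₄`. -/
noncomputable def s2 (m : ℕ) (a b : F) : KMod F 2 m :=
  if h : a ≠ 0 ∧ b ≠ 0 then symbol m ![Units.mk0 a h.1, Units.mk0 b h.2] else 0

open scoped Classical in
/-- `{a,b,c,d}` in `K₄(F)/2^m K₄(F)` for field elements, junk value `0`. -/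
noncomputable def s4 (m : ℕ) (a b c d : F) : KMod F 4 m :=
  if h : a ≠ 0 ∧ b ≠ 0 ∧ c ≠ 0 ∧ d ≠ 0 then
    symbol m ![Units.mk0 a h.1, Units.mk0 b h.2.1, Units.mk0 c h.2.2.1, Units.mk0 d h.2.2.2]
  else 0

end Milnor

open Milnor

/-!
By bilinearity the two sides differ by `{α, λ}₂ + {γ, λ}₂ = {αγ, λ}₂`, and `λ = x² + αγ y²` is a
norm from `F(√(αγ))` (in characteristic `2`, `x² + s y² = x² - s y²`), so this symbol vanishes.
Concretely, with `s = αγ` and `x, y ≠ 0`, write `λ = x² (1 + v)` where `v = s (y/x)²`: then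
`{s, λ} = {s, x²} + {v, 1 + v} + {(x/y)², 1 + v}`, a Steinberg symbol (`1 + v = 1 - v`) plus
symbols with a square entry, which are `2`-divisible. The case `x = 0` reduces to `{s, s} = 0`.
-/

namespace Milnor

variable {F : Type*} [Field F]

theorem symbol_eq_add_of_mul {n : ℕ} (m : ℕ) (i : Fin n) {u v w : Fin n → Fˣ}
    (huvw : ∀ j, j ≠ i → u j = v j ∧ u j = w j) (hw : w i = u i * v i) :
    symbol (F := F) m w = symbol m u + symbol m v := by
  have hrel : (QuotientAddGroup.mk (FreeAbelianGroup.of w - FreeAbelianGroup.of u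
      - FreeAbelianGroup.of v) : K F n) = 0 :=
    (QuotientAddGroup.eq_zero_iff _).2
      (AddSubgroup.subset_closure (Or.inl ⟨i, u, v, w, huvw, hw, rfl⟩))
  rw [QuotientAddGroup.mk_sub, QuotientAddGroup.mk_sub, sub_sub, sub_eq_zero] at hrel
  rw [symbol, hrel]
  rfl

theorem symbol_eq_zero_of_add_eq_one {n : ℕ} (m : ℕ) {i j : Fin n} (hij : i ≠ j)
    {u : Fin n → Fˣ} (h : (u i : F) + u j = 1) : symbol m u = 0 := by
  have hrel : (QuotientAddGroup.mk (FreeAbelianGroup.of u) : K F n) = 0 :=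
    (QuotientAddGroup.eq_zero_iff _).2
      (AddSubgroup.subset_closure (Or.inr ⟨i, j, u, hij, h, rfl⟩))
  rw [symbol, hrel]
  rfl

theorem KMod.pow_two_nsmul_eq_zero {n m : ℕ} (z : KMod F n m) : 2 ^ m • z = 0 := by
  induction z using QuotientAddGroup.induction_on with
  | H y =>
    change (QuotientAddGroup.mk (2 ^ m • y) : K F n ⧸ modSub F n m) = 0
    exact (QuotientAddGroup.eq_zero_iff _).2 (AddSubgroup.subset_closure ⟨y, rfl⟩)

theorem KMod.add_self_eq_zero {n : ℕ} (z : KMod F n 1) : z + z = 0 := by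
  simpa [two_nsmul] using KMod.pow_two_nsmul_eq_zero z

theorem s2_of_ne_zero (m : ℕ) {a b : F} (ha : a ≠ 0) (hb : b ≠ 0) :
    s2 m a b = symbol m ![Units.mk0 a ha, Units.mk0 b hb] :=
  dif_pos ⟨ha, hb⟩

theorem s2_mul_left (m : ℕ) {a b c : F} (ha : a ≠ 0) (hb : b ≠ 0) (hc : c ≠ 0) :
    s2 m (a * b) c = s2 m a c + s2 m b c := by
  rw [s2_of_ne_zero m (mul_ne_zero ha hb) hc, s2_of_ne_zero m ha hc, s2_of_ne_zero m hb hc]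
  refine symbol_eq_add_of_mul m 0 (fun j hj => ?_) (Units.ext rfl)
  fin_cases j
  · exact absurd rfl hj
  · simp

theorem s2_mul_right (m : ℕ) {a b c : F} (ha : a ≠ 0) (hb : b ≠ 0) (hc : c ≠ 0) :
    s2 m a (b * c) = s2 m a b + s2 m a c := by
  rw [s2_of_ne_zero m ha (mul_ne_zero hb hc), s2_of_ne_zero m ha hb, s2_of_ne_zero m ha hc]
  refine symbol_eq_add_of_mul m 1 (fun j hj => ?_) (Units.ext rfl)
  fin_cases j
  · simp
  · exact absurd rfl hj

theorem s2_of_add_eq_one (m : ℕ) {a b : F} (h : a + b = 1) : s2 m a b = 0 := by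
  by_cases hab : a ≠ 0 ∧ b ≠ 0
  · rw [s2_of_ne_zero m hab.1 hab.2]
    exact symbol_eq_zero_of_add_eq_one m (i := 0) (j := 1) (by decide) (by simpa using h)
  · exact dif_neg hab

theorem s2_sq_left (a c : F) : s2 1 (a ^ 2) c = 0 := by
  rcases eq_or_ne a 0 with rfl | ha
  · simp [s2]
  rcases eq_or_ne c 0 with rfl | hc
  · simp [s2]
  rw [sq, s2_mul_left 1 ha ha hc]
  exact KMod.add_self_eq_zero _

theorem s2_sq_right (a c : F) : s2 1 a (c ^ 2) = 0 := by
  rcases eq_or_ne a 0 with rfl | ha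
  · simp [s2]
  rcases eq_or_ne c 0 with rfl | hc
  · simp [s2]
  rw [sq, s2_mul_right 1 ha hc hc]
  exact KMod.add_self_eq_zero _

variable [CharP F 2]

theorem s2_one_add (m : ℕ) (a : F) : s2 m a (1 + a) = 0 :=
  s2_of_add_eq_one m (by rw [add_left_comm, CharTwo.add_self_eq_zero, add_zero])

theorem s2_one_add_mul_sq (s : F) {z : F} (hz : z ≠ 0) : s2 1 s (1 + s * z ^ 2) = 0 := by
  rcases eq_or_ne s 0 with rfl | hs
  · simp [s2]
  rcases eq_or_ne (1 + s * z ^ 2) 0 with hv | hv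
  · simp [s2, hv]
  calc s2 1 s (1 + s * z ^ 2) = s2 1 (s * z ^ 2 * z⁻¹ ^ 2) (1 + s * z ^ 2) := by
        rw [mul_assoc, ← mul_pow, mul_inv_cancel₀ hz, one_pow, mul_one]
    _ = s2 1 (s * z ^ 2) (1 + s * z ^ 2) + s2 1 (z⁻¹ ^ 2) (1 + s * z ^ 2) :=
        s2_mul_left 1 (mul_ne_zero hs (pow_ne_zero 2 hz)) (pow_ne_zero 2 (inv_ne_zero hz)) hv
    _ = 0 := by rw [s2_sq_left, add_zero, s2_one_add]

/-- `1 + s = s (1 + s⁻¹)`, where `{s, 1 + s}` vanishes by Steinberg and `{s, 1 + s⁻¹}` by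
`s2_one_add_mul_sq` with `z = s⁻¹`. -/
theorem s2_self (s : F) : s2 1 s s = 0 := by
  rcases eq_or_ne s 0 with rfl | hs0
  · simp [s2]
  rcases eq_or_ne s 1 with rfl | hs1
  · simpa using s2_sq_left (1 : F) 1
  have hsinv : s * s⁻¹ ^ 2 = s⁻¹ := by field_simp
  have hne : 1 + s * s⁻¹ ^ 2 ≠ 0 := by
    rw [hsinv, ← CharTwo.sub_eq_add, sub_ne_zero, ne_comm, inv_ne_one]
    exact hs1
  have hfactor : 1 + s = s * (1 + s * s⁻¹ ^ 2) := by
    rw [hsinv, mul_add, mul_inv_cancel₀ hs0, mul_one, add_comm]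
  have hsteinberg := s2_one_add 1 s
  rwa [hfactor, s2_mul_right 1 hs0 hs0 hne,
    s2_one_add_mul_sq s (inv_ne_zero hs0), add_zero] at hsteinberg

theorem s2_sq_add_mul_sq (s x y : F) : s2 1 s (x ^ 2 + s * y ^ 2) = 0 := by
  rcases eq_or_ne s 0 with rfl | hs
  · simp [s2]
  rcases eq_or_ne y 0 with rfl | hy
  · simpa using s2_sq_right s x
  rcases eq_or_ne x 0 with rfl | hx
  · rw [zero_pow two_ne_zero, zero_add, s2_mul_right 1 hs hs (pow_ne_zero 2 hy), s2_self,
      s2_sq_right, add_zero]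
  have hfactor : x ^ 2 + s * y ^ 2 = x ^ 2 * (1 + s * (y / x) ^ 2) := by field_simp
  rcases eq_or_ne (1 + s * (y / x) ^ 2) 0 with hv | hv
  · simp [s2, hfactor, hv]
  rw [hfactor, s2_mul_right 1 hs (pow_ne_zero 2 hx) hv, s2_sq_right,
    s2_one_add_mul_sq s (div_ne_zero hy hx), add_zero]

end Milnor

theorem stmt0_general (F : Type*) [Field F] [CharP F 2] (α β γ δ x y : F)
    (hα : α ≠ 0) (hβ : β ≠ 0) (hγ : γ ≠ 0) (hδ : δ ≠ 0)
    (hlam : x ^ 2 + α * γ * y ^ 2 ≠ 0) :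
    s2 1 α β + s2 1 γ δ =
      s2 1 α ((x ^ 2 + α * γ * y ^ 2) * β) + s2 1 γ ((x ^ 2 + α * γ * y ^ 2) * δ) := by
  have hnorm := s2_sq_add_mul_sq (α * γ) x y
  rw [s2_mul_left 1 hα hγ hlam] at hnorm
  rw [s2_mul_right 1 hα hlam hβ, s2_mul_right 1 hγ hlam hδ, add_add_add_comm, hnorm, zero_add]

/-- for `λ = x² + αγy² ≠ 0` (with `x, y` not both zero),
`{α,β}₂ + {γ,δ}₂ = {α,λβ}₂ + {γ,λδ}₂`. -/
theorem stmt0 (F : Type*) [Field F] [CharP F 2] (a b c d α β γ δ x y : F)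
    (ha : a ≠ 0) (hb : b ≠ 0) (hc : c ≠ 0) (hd : d ≠ 0)
    (hα : α ≠ 0) (hβ : β ≠ 0) (hγ : γ ≠ 0) (hδ : δ ≠ 0)
    (hxy : ¬ (x = 0 ∧ y = 0))
    (hlam : x ^ 2 + α * γ * y ^ 2 ≠ 0) :
    s2 1 α β + s2 1 γ δ =
      s2 1 α ((x ^ 2 + α * γ * y ^ 2) * β) + s2 1 γ ((x ^ 2 + α * γ * y ^ 2) * δ) :=
  stmt0_general F α β γ δ x y hα hβ hγ hδ hlam
end

section
/- Let F be a field of characteristic 2 and a, b, c, d ∈ F×. If the 6-dimensional bilinear Albert form ⟨a, b, ab, c, d, cd⟩ is anisotropic over F, then the symbols {a,b}₂ and {c,d}₂ in K₂(F)/2K₂(F) have no common slot: there are no e, f, g ∈ F× with {a,b}₂ = {e,f}₂ and {c,d}₂ = {e,g}₂. -/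
open Milnor

/-!
For derivations `D₁, D₂` of `F`, the value of `dlog x ∧ dlog y` on `(D₁, D₂)` is a Steinberg
symbol, so it factors through `K₂(F)/2`. When `⟨⟨a, b⟩⟩` is anisotropic, i.e. `a, b` are
`2`-independent, a derivation of `F` can be prescribed freely on `a`, `b` and on one further
element outside `F²(a, b)` (Zorn's lemma, adjoining one square root at a time). Testing
`{a,b}₂ = {e,f}₂` against such derivations shows first that `e, f ∈ F²(a, b)`, and then, comparing
`ef/ab` with the Jacobian of `(e, f)` with respect to `(a, b)`, that `e` is a value of the pure
part `⟨a, b, ab⟩`. A common slot `e` of `{a,b}₂` and `{c,d}₂` is then a nonzero value of both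
`⟨a, b, ab⟩` and `⟨c, d, cd⟩`, so the Albert form is isotropic.
-/
namespace Milnor

variable {F : Type*} [Field F] {A : Type*} [AddCommGroup A]

structure IsSteinbergSymbol (f : Fˣ → Fˣ → A) : Prop where
  map_mul_left : ∀ x x' y, f (x * x') y = f x y + f x' y
  map_mul_right : ∀ x y y', f x (y * y') = f x y + f x y'
  map_of_add_eq_one : ∀ x y : Fˣ, (x : F) + y = 1 → f x y = 0

namespace IsSteinbergSymbol

variable {f : Fˣ → Fˣ → A}

theorem rels_le_ker (hf : IsSteinbergSymbol f) :
    rels F 2 ≤ (FreeAbelianGroup.lift fun v : Fin 2 → Fˣ ↦ f (v 0) (v 1)).ker := by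
  rw [rels, AddSubgroup.closure_le]
  rintro x (⟨i, u, v, w, hj, hw, rfl⟩ | ⟨i, j, u, hij, hu, rfl⟩) <;>
    simp only [SetLike.mem_coe, AddMonoidHom.mem_ker, map_sub, FreeAbelianGroup.lift_apply_of]
  · fin_cases i
    · obtain ⟨h1, h2⟩ := hj 1 (by decide)
      simp only [Fin.zero_eta] at hw
      rw [hw, ← h1, ← h2, hf.map_mul_left]
      abel
    · obtain ⟨h1, h2⟩ := hj 0 (by decide)
      simp only [Fin.mk_one] at hw
      rw [hw, ← h1, ← h2, hf.map_mul_right]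
      abel
  · fin_cases i <;> fin_cases j
    · exact absurd rfl hij
    · exact hf.map_of_add_eq_one _ _ hu
    · exact hf.map_of_add_eq_one _ _ (by rw [add_comm]; exact hu)
    · exact absurd rfl hij

def liftK (hf : IsSteinbergSymbol f) : K F 2 →+ A :=
  QuotientAddGroup.lift _ _ hf.rels_le_ker

def liftKMod (hf : IsSteinbergSymbol f) (m : ℕ) (htors : ∀ x : A, 2 ^ m • x = 0) :
    KMod F 2 m →+ A :=
  QuotientAddGroup.lift _ hf.liftK <| (AddSubgroup.closure_le _).2 <| by
    rintro _ ⟨y, rfl⟩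
    simp only [SetLike.mem_coe, AddMonoidHom.mem_ker, map_nsmul, htors]

theorem liftKMod_symbol (hf : IsSteinbergSymbol f) (m : ℕ) (htors : ∀ x : A, 2 ^ m • x = 0)
    (v : Fin 2 → Fˣ) : hf.liftKMod m htors (symbol m v) = f (v 0) (v 1) :=
  FreeAbelianGroup.lift_apply_of _ _

end IsSteinbergSymbol

end Milnor

section DlogWedge

variable {F : Type*} [Field F]

/-- `(dlog x ∧ dlog y)(D₁, D₂)`. -/
def dlogWedge (D₁ D₂ : Derivation ℤ F F) (x y : F) : F :=
  (D₁ x * D₂ y - D₂ x * D₁ y) / (x * y)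

variable (D₁ D₂ : Derivation ℤ F F)

theorem dlogWedge_mul_left {x x' : F} (hx : x ≠ 0) (hx' : x' ≠ 0) (y : F) :
    dlogWedge D₁ D₂ (x * x') y = dlogWedge D₁ D₂ x y + dlogWedge D₁ D₂ x' y := by
  rcases eq_or_ne y 0 with rfl | hy
  · simp [dlogWedge]
  simp only [dlogWedge, Derivation.leibniz, smul_eq_mul]
  field_simp
  ring

theorem dlogWedge_swap (x y : F) : dlogWedge D₁ D₂ y x = -dlogWedge D₁ D₂ x y := by
  simp only [dlogWedge, mul_comm y x, ← neg_div]
  ring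

theorem dlogWedge_of_add_eq_one {x y : F} (h : x + y = 1) : dlogWedge D₁ D₂ x y = 0 := by
  have hD (D : Derivation ℤ F F) : D y = -D x := by
    rw [eq_neg_iff_add_eq_zero, add_comm, ← map_add, h, D.map_one_eq_zero]
  simp only [dlogWedge, hD]
  ring

theorem isSteinbergSymbol_dlogWedge :
    IsSteinbergSymbol fun x y : Fˣ ↦ dlogWedge D₁ D₂ x y where
  map_mul_left x x' y := by
    push_cast
    exact dlogWedge_mul_left D₁ D₂ x.ne_zero x'.ne_zero y
  map_mul_right x y y' := by
    push_cast
    rw [dlogWedge_swap, dlogWedge_mul_left D₁ D₂ y.ne_zero y'.ne_zero, neg_add,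
      ← dlogWedge_swap, ← dlogWedge_swap]
  map_of_add_eq_one _ _ := dlogWedge_of_add_eq_one D₁ D₂

theorem dlogWedge_eq_of_s2_eq [CharP F 2] {a b e f : F} (ha : a ≠ 0) (hb : b ≠ 0)
    (he : e ≠ 0) (hf : f ≠ 0) (h : s2 1 a b = s2 1 e f) :
    dlogWedge D₁ D₂ a b = dlogWedge D₁ D₂ e f := by
  have htors (x : F) : 2 ^ 1 • x = 0 := by rw [pow_one, two_nsmul, CharTwo.add_self_eq_zero]
  have := congrArg ((isSteinbergSymbol_dlogWedge D₁ D₂).liftKMod 1 htors) h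
  simpa [s2, ha, hb, he, hf, IsSteinbergSymbol.liftKMod_symbol] using this

end DlogWedge

section ExtendingDerivations

variable {F : Type*} [Field F]

theorem Subfield.injective_add_mul_of_notMem (M : Subfield F) {t : F} (ht : t ∉ M) :
    Function.Injective fun uv : M × M ↦ (uv.1 : F) + uv.2 * t := by
  rintro ⟨⟨u, hu⟩, ⟨v, hv⟩⟩ ⟨⟨u', hu'⟩, ⟨v', hv'⟩⟩ h
  simp only at h
  obtain rfl : v = v' := by
    by_contra hvv
    have hne : v' - v ≠ 0 := sub_ne_zero.2 (Ne.symm hvv)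
    refine ht ?_
    rw [show t = (u - u') / (v' - v) by rw [eq_div_iff hne]; linear_combination -h]
    exact M.div_mem (M.sub_mem hu hu') (M.sub_mem hv' hv)
  obtain rfl : u = u' := by linear_combination h
  rfl

/-- `M + M t`; it is a subfield because `(u + v t)⁻¹ = (u + v t) / (u + v t)²` and
`(u + v t)² = u² + v² t² ∈ M` in characteristic `2`. -/
def Subfield.adjoinSqrt [CharP F 2] (M : Subfield F) (t : F) (ht : t ^ 2 ∈ M) : Subfield F where
  carrier := {x | ∃ u ∈ M, ∃ v ∈ M, u + v * t = x}
  zero_mem' := ⟨0, M.zero_mem, 0, M.zero_mem, by ring⟩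
  one_mem' := ⟨1, M.one_mem, 0, M.zero_mem, by ring⟩
  add_mem' := by
    rintro _ _ ⟨u, hu, v, hv, rfl⟩ ⟨u', hu', v', hv', rfl⟩
    exact ⟨u + u', M.add_mem hu hu', v + v', M.add_mem hv hv', by ring⟩
  mul_mem' := by
    rintro _ _ ⟨u, hu, v, hv, rfl⟩ ⟨u', hu', v', hv', rfl⟩
    refine ⟨u * u' + v * v' * t ^ 2,
      M.add_mem (M.mul_mem hu hu') (M.mul_mem (M.mul_mem hv hv') ht),
      u * v' + u' * v, M.add_mem (M.mul_mem hu hv') (M.mul_mem hu' hv), by ring⟩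
  neg_mem' := by
    rintro _ ⟨u, hu, v, hv, rfl⟩
    exact ⟨-u, M.neg_mem hu, -v, M.neg_mem hv, by ring⟩
  inv_mem' := by
    rintro _ ⟨u, hu, v, hv, rfl⟩
    have hsq : (u + v * t) ^ 2 = u ^ 2 + v ^ 2 * t ^ 2 := by
      linear_combination u * v * t * CharTwo.two_eq_zero (R := F)
    have hw : ((u + v * t) ^ 2)⁻¹ ∈ M := by
      rw [hsq]
      exact M.inv_mem (M.add_mem (M.pow_mem hu 2) (M.mul_mem (M.pow_mem hv 2) ht))
    refine ⟨u * ((u + v * t) ^ 2)⁻¹, M.mul_mem hu hw, v * ((u + v * t) ^ 2)⁻¹,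
      M.mul_mem hv hw, ?_⟩
    rcases eq_or_ne (u + v * t) 0 with h0 | h0
    · simp [h0]
    · field_simp

/-- A derivation of a subfield `domain ⊇ F²` of `F` into `F`, stored as a function on all of `F`
whose values off `domain` are irrelevant. -/
structure PartialDerivation (F : Type*) [Field F] where
  domain : Subfield F
  toFun : F → F
  sq_mem : ∀ s : F, s ^ 2 ∈ domain
  map_sq : ∀ s : F, toFun (s ^ 2) = 0
  map_add : ∀ x ∈ domain, ∀ y ∈ domain, toFun (x + y) = toFun x + toFun y
  leibniz : ∀ x ∈ domain, ∀ y ∈ domain, toFun (x * y) = x * toFun y + y * toFun x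

namespace PartialDerivation

instance : CoeFun (PartialDerivation F) fun _ ↦ F → F := ⟨toFun⟩

instance : Preorder (PartialDerivation F) where
  le p q := p.domain ≤ q.domain ∧ ∀ x ∈ p.domain, q x = p x
  le_refl _ := ⟨le_rfl, fun _ _ ↦ rfl⟩
  le_trans _ _ _ hpq hqr :=
    ⟨hpq.1.trans hqr.1, fun x hx ↦ (hqr.2 x (hpq.1 hx)).trans (hpq.2 x hx)⟩

theorem map_zero (p : PartialDerivation F) : p 0 = 0 := by
  simpa using p.map_sq 0

theorem map_one (p : PartialDerivation F) : p 1 = 0 := by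
  simpa using p.map_sq 1

theorem exists_upperBound_of_isChain {c : Set (PartialDerivation F)} (hc : IsChain (· ≤ ·) c)
    (hne : c.Nonempty) : ∃ q : PartialDerivation F, ∀ p ∈ c, p ≤ q := by
  classical
  have : Nonempty c := hne.to_subtype
  have hcommon : ∀ p ∈ c, ∀ q ∈ c, ∃ r ∈ c, p ≤ r ∧ q ≤ r := fun p hp q hq ↦
    (hc.total hp hq).elim (fun h ↦ ⟨q, hq, h, le_rfl⟩) (fun h ↦ ⟨p, hp, le_rfl, h⟩)
  have hdir : Directed (· ≤ ·) fun p : c ↦ p.1.domain := fun p q ↦ by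
    obtain ⟨r, hr, hpr, hqr⟩ := hcommon p p.2 q q.2
    exact ⟨⟨r, hr⟩, hpr.1, hqr.1⟩
  have hmem {x : F} : x ∈ ⨆ p : c, p.1.domain ↔ ∃ p ∈ c, x ∈ p.domain := by
    simp [Subfield.mem_iSup_of_directed hdir]
  have hmem₂ {x y : F} (hx : x ∈ ⨆ p : c, p.1.domain) (hy : y ∈ ⨆ p : c, p.1.domain) :
      ∃ p ∈ c, x ∈ p.domain ∧ y ∈ p.domain := by
    obtain ⟨p, hp, hxp⟩ := hmem.1 hx
    obtain ⟨q, hq, hyq⟩ := hmem.1 hy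
    obtain ⟨r, hr, hpr, hqr⟩ := hcommon p hp q hq
    exact ⟨r, hr, hpr.1 hxp, hqr.1 hyq⟩
  let D : F → F := fun x ↦ if h : ∃ p ∈ c, x ∈ p.domain then h.choose x else 0
  have hD : ∀ p ∈ c, ∀ x ∈ p.domain, D x = p x := by
    intro p hp x hx
    have h : ∃ p ∈ c, x ∈ p.domain := ⟨p, hp, hx⟩
    obtain ⟨hq, hxq⟩ := h.choose_spec
    simp only [D, dif_pos h]
    rcases hc.total hq hp with hle | hle
    · exact (hle.2 x hxq).symm
    · exact hle.2 x hx
  obtain ⟨p₀, hp₀⟩ := hne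
  refine ⟨{ domain := ⨆ p : c, p.1.domain
            toFun := D
            sq_mem := fun s ↦ hmem.2 ⟨p₀, hp₀, p₀.sq_mem s⟩
            map_sq := fun s ↦ (hD p₀ hp₀ _ (p₀.sq_mem s)).trans (p₀.map_sq s)
            map_add := fun x hx y hy ↦ ?_
            leibniz := fun x hx y hy ↦ ?_ },
    fun p hp ↦ ⟨fun x hx ↦ hmem.2 ⟨p, hp, hx⟩, hD p hp⟩⟩
  · obtain ⟨p, hp, hxp, hyp⟩ := hmem₂ hx hy
    rw [hD p hp x hxp, hD p hp y hyp, hD p hp _ (p.domain.add_mem hxp hyp),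
      p.map_add x hxp y hyp]
  · obtain ⟨p, hp, hxp, hyp⟩ := hmem₂ hx hy
    rw [hD p hp x hxp, hD p hp y hyp, hD p hp _ (p.domain.mul_mem hxp hyp),
      p.leibniz x hxp y hyp]

variable (p : PartialDerivation F) {t : F}

noncomputable def adjoinFun (t c : F) : F → F :=
  Function.extend (fun uv : p.domain × p.domain ↦ (uv.1 : F) + uv.2 * t)
    (fun uv ↦ p uv.1 + p uv.2 * t + uv.2 * c) 0

theorem adjoinFun_apply (ht : t ∉ p.domain) (c : F) {u v : F} (hu : u ∈ p.domain)
    (hv : v ∈ p.domain) : p.adjoinFun t c (u + v * t) = p u + p v * t + v * c :=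
  (p.domain.injective_add_mul_of_notMem ht).extend_apply _ _ (⟨u, hu⟩, ⟨v, hv⟩)

variable [CharP F 2]

def squares : PartialDerivation F where
  domain := (frobenius F 2).fieldRange
  toFun := 0
  sq_mem s := ⟨s, frobenius_def 2 s⟩
  map_sq _ := rfl
  map_add _ _ _ _ := (add_zero 0).symm
  leibniz _ _ _ _ := by simp

/-- The extension of `p` to `p.domain(t)` taking the value `c` at `t`. -/
noncomputable def adjoin (ht : t ∉ p.domain) (c : F) : PartialDerivation F where
  domain := p.domain.adjoinSqrt t (p.sq_mem t)
  toFun := p.adjoinFun t c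
  sq_mem s := ⟨s ^ 2, p.sq_mem s, 0, p.domain.zero_mem, by ring⟩
  map_sq s := by
    rw [← add_zero (s ^ 2), ← zero_mul t, p.adjoinFun_apply ht c (p.sq_mem s) p.domain.zero_mem,
      p.map_sq, p.map_zero]
    ring
  map_add := by
    rintro _ ⟨u, hu, v, hv, rfl⟩ _ ⟨u', hu', v', hv', rfl⟩
    rw [show u + v * t + (u' + v' * t) = (u + u') + (v + v') * t by ring,
      p.adjoinFun_apply ht c (p.domain.add_mem hu hu') (p.domain.add_mem hv hv'),
      p.adjoinFun_apply ht c hu hv, p.adjoinFun_apply ht c hu' hv',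
      p.map_add u hu u' hu', p.map_add v hv v' hv']
    ring
  leibniz := by
    rintro _ ⟨u, hu, v, hv, rfl⟩ _ ⟨u', hu', v', hv', rfl⟩
    have huu' := p.domain.mul_mem hu hu'
    have hvv't := p.domain.mul_mem (p.domain.mul_mem hv hv') (p.sq_mem t)
    have huv' := p.domain.mul_mem hu hv'
    have hu'v := p.domain.mul_mem hu' hv
    rw [show (u + v * t) * (u' + v' * t) = (u * u' + v * v' * t ^ 2) + (u * v' + u' * v) * t by
        ring,
      p.adjoinFun_apply ht c (p.domain.add_mem huu' hvv't) (p.domain.add_mem huv' hu'v),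
      p.adjoinFun_apply ht c hu hv, p.adjoinFun_apply ht c hu' hv',
      p.map_add _ huu' _ hvv't, p.map_add _ huv' _ hu'v,
      p.leibniz u hu u' hu', p.leibniz _ (p.domain.mul_mem hv hv') _ (p.sq_mem t),
      p.leibniz v hv v' hv',
      p.leibniz u hu v' hv', p.leibniz u' hu' v hv, p.map_sq t]
    linear_combination -(v * v' * t * c) * CharTwo.two_eq_zero (R := F)

theorem le_adjoin (ht : t ∉ p.domain) (c : F) : p ≤ p.adjoin ht c := by
  refine ⟨fun x hx ↦ ⟨x, hx, 0, p.domain.zero_mem, by ring⟩, fun x hx ↦ ?_⟩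
  change p.adjoinFun t c x = p x
  simpa [p.map_zero] using p.adjoinFun_apply ht c hx p.domain.zero_mem

theorem mem_adjoin_self (ht : t ∉ p.domain) (c : F) : t ∈ (p.adjoin ht c).domain :=
  ⟨0, p.domain.zero_mem, 1, p.domain.one_mem, by ring⟩

theorem adjoin_apply_self (ht : t ∉ p.domain) (c : F) : p.adjoin ht c t = c := by
  change p.adjoinFun t c t = c
  simpa [p.map_zero, p.map_one] using p.adjoinFun_apply ht c p.domain.zero_mem p.domain.one_mem

theorem exists_derivation_extending (p : PartialDerivation F) :
    ∃ D : Derivation ℤ F F, ∀ x ∈ p.domain, D x = p x := by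
  obtain ⟨m, hpm, hmax⟩ := zorn_le_nonempty₀ Set.univ
    (fun c _ hc q hq ↦ (exists_upperBound_of_isChain hc ⟨q, hq⟩).imp fun r hr ↦ ⟨trivial, hr⟩)
    p trivial
  have htop : ∀ t, t ∈ m.domain := fun t ↦ by
    by_contra ht
    exact ht <| (hmax.2 trivial (m.le_adjoin ht 0)).1 (m.mem_adjoin_self ht 0)
  let Dadd : F →+ F := AddMonoidHom.mk' m fun x y ↦ m.map_add x (htop x) y (htop y)
  exact ⟨Derivation.mk' Dadd.toIntLinearMap fun x y ↦ m.leibniz x (htop x) y (htop y),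
    fun x hx ↦ hpm.2 x hx⟩

end PartialDerivation

end ExtendingDerivations

section PfisterForm

variable {F : Type*} [Field F]

/-- `⟨a, b, ab⟩(x, y, z)`; `⟨a, b, ab⟩` is the pure part of the bilinear Pfister form
`⟨⟨a, b⟩⟩ = ⟨1, a, b, ab⟩`. -/
def purePfisterForm (a b x y z : F) : F := a * x ^ 2 + b * y ^ 2 + a * b * z ^ 2

def pfisterForm (a b w x y z : F) : F := w ^ 2 + purePfisterForm a b x y z

def PfisterAnisotropic (a b : F) : Prop :=
  ∀ w x y z : F, pfisterForm a b w x y z = 0 → w = 0 ∧ x = 0 ∧ y = 0 ∧ z = 0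

def PurePfisterAnisotropic (a b : F) : Prop :=
  ∀ x y z : F, purePfisterForm a b x y z = 0 → x = 0 ∧ y = 0 ∧ z = 0

/-- In characteristic `2` this is the subfield `F²(a, b)`. -/
def pfisterValues (a b : F) : Set F := {e | ∃ w x y z, pfisterForm a b w x y z = e}

theorem PfisterAnisotropic.left_ne_zero {a b : F} (h : PfisterAnisotropic a b) : a ≠ 0 := by
  rintro rfl
  exact one_ne_zero (h 0 1 0 0 (by simp [pfisterForm, purePfisterForm])).2.1

theorem PfisterAnisotropic.right_ne_zero {a b : F} (h : PfisterAnisotropic a b) : b ≠ 0 := by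
  rintro rfl
  exact one_ne_zero (h 0 0 1 0 (by simp [pfisterForm, purePfisterForm])).2.2.1

variable [CharP F 2]

theorem PurePfisterAnisotropic.pfisterAnisotropic {a b : F} (h : PurePfisterAnisotropic a b) :
    PfisterAnisotropic a b := by
  intro w x y z hw
  suffices w = 0 by
    subst this
    exact ⟨rfl, h x y z (by simpa [pfisterForm] using hw)⟩
  -- `ab (w² + ab z²) ⟨⟨a, b⟩⟩(w, x, y, z)` is a value of the pure part
  have hpure : purePfisterForm a b (b * y * w + a * b * z * x) (a * x * w + a * b * z * y)
      (w ^ 2 + a * b * z ^ 2) = 0 := by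
    have : a * b * (w ^ 2 + a * b * z ^ 2) * pfisterForm a b w x y z = 0 := by rw [hw, mul_zero]
    simp only [pfisterForm, purePfisterForm] at this ⊢
    linear_combination this + 2 * a ^ 2 * b ^ 2 * w * x * y * z * CharTwo.two_eq_zero (R := F)
  have hwz : purePfisterForm a b w (a * z) 0 = 0 := by
    unfold purePfisterForm
    linear_combination a * (h _ _ _ hpure).2.2
  exact (h _ _ _ hwz).1

theorem Derivation.map_sq_eq_zero (D : Derivation ℤ F F) (s : F) : D (s ^ 2) = 0 := by
  rw [D.leibniz_pow, two_smul, CharTwo.add_self_eq_zero]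

theorem Derivation.map_pfisterForm (D : Derivation ℤ F F) (a b w x y z : F) :
    D (pfisterForm a b w x y z) = x ^ 2 * D a + y ^ 2 * D b + z ^ 2 * (a * D b + b * D a) := by
  simp only [pfisterForm, purePfisterForm, map_add, Derivation.leibniz, smul_eq_mul,
    D.map_sq_eq_zero]
  ring

end PfisterForm

section ExistsDerivation

variable {F : Type*} [Field F] [CharP F 2] {a b : F}

open PartialDerivation in
theorem PfisterAnisotropic.exists_partialDerivation (h : PfisterAnisotropic a b) (ca cb : F) :
    ∃ p : PartialDerivation F, a ∈ p.domain ∧ b ∈ p.domain ∧ p a = ca ∧ p b = cb ∧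
      (p.domain : Set F) ⊆ pfisterValues a b := by
  have ha : a ∉ (squares : PartialDerivation F).domain := by
    rintro ⟨s, rfl⟩
    refine one_ne_zero (h s 1 0 0 ?_).2.1
    simp [pfisterForm, purePfisterForm, frobenius_def, CharTwo.add_self_eq_zero]
  set p₁ := squares.adjoin ha ca
  have hb : b ∉ p₁.domain := by
    rintro ⟨_, ⟨s, rfl⟩, _, ⟨t, rfl⟩, hb⟩
    refine one_ne_zero (h s t 1 0 ?_).2.2.1
    simp only [pfisterForm, purePfisterForm, frobenius_def] at hb ⊢
    linear_combination hb + b * CharTwo.two_eq_zero (R := F)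
  refine ⟨p₁.adjoin hb cb, (p₁.le_adjoin hb cb).1 (mem_adjoin_self _ ha ca),
    mem_adjoin_self _ hb cb, ?_, adjoin_apply_self _ hb cb, ?_⟩
  · rw [(p₁.le_adjoin hb cb).2 a (mem_adjoin_self _ ha ca), adjoin_apply_self]
  · rintro _ ⟨_, ⟨_, ⟨s, rfl⟩, _, ⟨t, rfl⟩, rfl⟩, _,
      ⟨_, ⟨u, rfl⟩, _, ⟨v, rfl⟩, rfl⟩, rfl⟩
    refine ⟨s, t, u, v, ?_⟩
    simp only [pfisterForm, purePfisterForm, frobenius_def]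
    ring

theorem PfisterAnisotropic.exists_derivation (h : PfisterAnisotropic a b) (ca cb : F) :
    ∃ D : Derivation ℤ F F, D a = ca ∧ D b = cb := by
  obtain ⟨p, hap, hbp, hpa, hpb, -⟩ := h.exists_partialDerivation ca cb
  obtain ⟨D, hD⟩ := p.exists_derivation_extending
  exact ⟨D, (hD a hap).trans hpa, (hD b hbp).trans hpb⟩

theorem PfisterAnisotropic.exists_derivation_of_notMem (h : PfisterAnisotropic a b) {e : F}
    (he : e ∉ pfisterValues a b) (ca cb ce : F) :
    ∃ D : Derivation ℤ F F, D a = ca ∧ D b = cb ∧ D e = ce := by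
  obtain ⟨p, hap, hbp, hpa, hpb, hp⟩ := h.exists_partialDerivation ca cb
  have he' : e ∉ p.domain := fun hep ↦ he (hp hep)
  obtain ⟨D, hD⟩ := (p.adjoin he' ce).exists_derivation_extending
  have hle := p.le_adjoin he' ce
  refine ⟨D, ?_, ?_, (hD e (p.mem_adjoin_self he' ce)).trans (p.adjoin_apply_self he' ce)⟩
  · rw [hD a (hle.1 hap), hle.2 a hap, hpa]
  · rw [hD b (hle.1 hbp), hle.2 b hbp, hpb]

end ExistsDerivation

section CommonSlot

variable {F : Type*} [Field F] [CharP F 2] {a b e f : F}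

theorem PfisterAnisotropic.mem_pfisterValues_of_dlogWedge_eq (h : PfisterAnisotropic a b)
    (H : ∀ D₁ D₂ : Derivation ℤ F F, dlogWedge D₁ D₂ a b = dlogWedge D₁ D₂ e f) :
    e ∈ pfisterValues a b := by
  by_contra he
  obtain ⟨D₁, h₁a, h₁b, h₁e⟩ := h.exists_derivation_of_notMem he 1 0 0
  obtain ⟨D₂, h₂a, h₂b, h₂e⟩ := h.exists_derivation_of_notMem he 0 1 0
  have := H D₁ D₂
  simp [dlogWedge, h₁a, h₁b, h₁e, h₂a, h₂b, h₂e, h.left_ne_zero, h.right_ne_zero] at this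

theorem pfisterForm_mul_pfisterForm (a b p q r s p' q' r' s' : F) :
    pfisterForm a b p q r s * pfisterForm a b p' q' r' s' =
      pfisterForm a b (p * p' + a * q * q' + b * r * r' + a * b * s * s') (q * p' + p * q')
        (r * p' + p * r') (s * p' + p * s') +
      a * b * ((q ^ 2 + b * s ^ 2) * (r' ^ 2 + a * s' ^ 2) +
        (r ^ 2 + a * s ^ 2) * (q' ^ 2 + b * s' ^ 2)) := by
  simp only [pfisterForm, purePfisterForm]
  linear_combination -(2 * (a * p * q * p' * q' + a * b * p * s * p' * s' + b * p * r * p' * r') +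
    a * b * q * r * q' * r' + a * b ^ 2 * r * s * r' * s' + a ^ 2 * b * q * s * q' * s' +
    a ^ 2 * b ^ 2 * s ^ 2 * s' ^ 2) * CharTwo.two_eq_zero (R := F)

/-- For `e, f ∈ F²(a, b)` given as values of `⟨⟨a, b⟩⟩`, the right side of `hJ` is `ab` times the
Jacobian `∂(e, f)/∂(a, b)`; by `pfisterForm_mul_pfisterForm`, `hJ` makes `⟨⟨a, b⟩⟩` isotropic
unless `p = 0`. -/
theorem PfisterAnisotropic.eq_zero_of_mul_eq_jacobian (h : PfisterAnisotropic a b)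
    {p q r s p' q' r' s' : F} (he : pfisterForm a b p q r s ≠ 0)
    (hf : pfisterForm a b p' q' r' s' ≠ 0)
    (hJ : pfisterForm a b p q r s * pfisterForm a b p' q' r' s' =
      a * b * ((q ^ 2 + b * s ^ 2) * (r' ^ 2 + a * s' ^ 2) +
        (r ^ 2 + a * s ^ 2) * (q' ^ 2 + b * s' ^ 2))) :
    p = 0 := by
  rw [pfisterForm_mul_pfisterForm, add_eq_right] at hJ
  obtain ⟨h0, h1, h2, h3⟩ := h _ _ _ _ hJ
  by_contra hp
  have hp' : p' = 0 := by
    refine (mul_eq_zero.1 (?_ : p' * pfisterForm a b p q r s = 0)).resolve_right he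
    simp only [pfisterForm, purePfisterForm]
    linear_combination p * h0 + a * q * h1 + b * r * h2 + a * b * s * h3 -
      (a * p * q * q' + b * p * r * r' + a * b * p * s * s') * CharTwo.two_eq_zero (R := F)
  subst hp'
  simp only [mul_zero, zero_add, mul_eq_zero, hp, false_or] at h1 h2 h3
  exact hf (by simp [pfisterForm, purePfisterForm, h1, h2, h3])

theorem PfisterAnisotropic.exists_purePfisterForm_eq_of_dlogWedge_eq
    (h : PfisterAnisotropic a b) (he : e ≠ 0) (hf : f ≠ 0)
    (H : ∀ D₁ D₂ : Derivation ℤ F F, dlogWedge D₁ D₂ a b = dlogWedge D₁ D₂ e f) :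
    ∃ x y z, purePfisterForm a b x y z = e := by
  have H' (D₁ D₂ : Derivation ℤ F F) : dlogWedge D₁ D₂ a b = dlogWedge D₁ D₂ f e := by
    rw [H, dlogWedge_swap, CharTwo.neg_eq]
  obtain ⟨p, q, r, s, rfl⟩ := h.mem_pfisterValues_of_dlogWedge_eq H
  obtain ⟨p', q', r', s', rfl⟩ := h.mem_pfisterValues_of_dlogWedge_eq H'
  obtain ⟨D₁, h₁a, h₁b⟩ := h.exists_derivation 1 0
  obtain ⟨D₂, h₂a, h₂b⟩ := h.exists_derivation 0 1
  have hJ := H D₁ D₂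
  simp only [dlogWedge, D₁.map_pfisterForm, D₂.map_pfisterForm, h₁a, h₁b, h₂a, h₂b] at hJ
  rw [div_eq_div_iff (mul_ne_zero h.left_ne_zero h.right_ne_zero) (mul_ne_zero he hf)] at hJ
  have hp := h.eq_zero_of_mul_eq_jacobian he hf <| by
    linear_combination hJ - a * b * (r ^ 2 + a * s ^ 2) * (q' ^ 2 + b * s' ^ 2) *
      CharTwo.two_eq_zero (R := F)
  exact ⟨q, r, s, by rw [pfisterForm, hp, sq, zero_mul, zero_add]⟩

theorem PurePfisterAnisotropic.exists_purePfisterForm_eq_of_s2_eq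
    (h : PurePfisterAnisotropic a b) (he : e ≠ 0) (hf : f ≠ 0) (hs : s2 1 a b = s2 1 e f) :
    ∃ x y z, purePfisterForm a b x y z = e :=
  h.pfisterAnisotropic.exists_purePfisterForm_eq_of_dlogWedge_eq he hf fun D₁ D₂ ↦
    dlogWedge_eq_of_s2_eq D₁ D₂ h.pfisterAnisotropic.left_ne_zero
      h.pfisterAnisotropic.right_ne_zero he hf hs

end CommonSlot

theorem stmt6_general (F : Type*) [Field F] [CharP F 2] (a b c d : F)
    (haniso : ∀ x : Fin 6 → F,
      a * x 0 ^ 2 + b * x 1 ^ 2 + a * b * x 2 ^ 2 +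
        c * x 3 ^ 2 + d * x 4 ^ 2 + c * d * x 5 ^ 2 = 0 → x = 0) :
    ¬ ∃ e f g : F, e ≠ 0 ∧ f ≠ 0 ∧ g ≠ 0 ∧
      s2 1 a b = s2 1 e f ∧ s2 1 c d = s2 1 e g := by
  rintro ⟨e, f, g, he, hf, hg, hab, hcd⟩
  have hpure_ab : PurePfisterAnisotropic a b := fun x y z h ↦ by
    have := haniso ![x, y, z, 0, 0, 0] (by simpa [purePfisterForm] using h)
    exact ⟨congrFun this 0, congrFun this 1, congrFun this 2⟩
  have hpure_cd : PurePfisterAnisotropic c d := fun x y z h ↦ by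
    have := haniso ![0, 0, 0, x, y, z] (by simpa [purePfisterForm] using h)
    exact ⟨congrFun this 3, congrFun this 4, congrFun this 5⟩
  obtain ⟨x, y, z, rfl⟩ := hpure_ab.exists_purePfisterForm_eq_of_s2_eq he hf hab
  obtain ⟨x', y', z', hcd'⟩ := hpure_cd.exists_purePfisterForm_eq_of_s2_eq he hg hcd
  have hzero := haniso ![x, y, z, x', y', z'] <| by
    have := CharTwo.add_self_eq_zero (purePfisterForm a b x y z)
    nth_rw 2 [← hcd'] at this
    simpa [purePfisterForm, add_assoc] using this
  simp [purePfisterForm, show x = 0 from congrFun hzero 0, show y = 0 from congrFun hzero 1,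
    show z = 0 from congrFun hzero 2] at he

/-- if the Albert form `⟨a,b,ab,c,d,cd⟩` is anisotropic, then the
symbols `{a,b}₂` and `{c,d}₂` have no common slot. -/
theorem stmt6 (F : Type*) [Field F] [CharP F 2] (a b c d : F)
    (ha : a ≠ 0) (hb : b ≠ 0) (hc : c ≠ 0) (hd : d ≠ 0)
    (haniso : ∀ x : Fin 6 → F,
      a * x 0 ^ 2 + b * x 1 ^ 2 + a * b * x 2 ^ 2 +
        c * x 3 ^ 2 + d * x 4 ^ 2 + c * d * x 5 ^ 2 = 0 → x = 0) :
    ¬ ∃ e f g : F, e ≠ 0 ∧ f ≠ 0 ∧ g ≠ 0 ∧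
      s2 1 a b = s2 1 e f ∧ s2 1 c d = s2 1 e g :=
  stmt6_general F a b c d haniso
end
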